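/- arXiv:2411.04600 — 3 statements merged into one kernel-verified Lean document; each statement's English description precedes it below -/
import Mathlib

section
/- Let T(x,y) = (x − x^s(y), y − y^u(x)) with x^s, y^u continuous and L-Lipschitz, L < 1, and x^s(0)=0, y^u(0)=0. Then for every R > 0, the image T(B̄(0,R) × B̄(0,R)) contains B̄(0,(1−L)R) × B̄(0,(1−L)R). In particular T is surjective onto R^{n_u} × R^{n_s}. -/
theorem stmt_6 (nu ns : ℕ) (L : ℝ) (hL0 : 0 ≤ L) (hL : L < 1)
    (xs : EuclideanSpace ℝ (Fin ns) → EuclideanSpace ℝ (Fin nu))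
    (yu : EuclideanSpace ℝ (Fin nu) → EuclideanSpace ℝ (Fin ns))
    (hxsc : Continuous xs) (hyuc : Continuous yu)
    (hxs : ∀ y₁ y₂, ‖xs y₁ - xs y₂‖ ≤ L * ‖y₁ - y₂‖)
    (hyu : ∀ x₁ x₂, ‖yu x₁ - yu x₂‖ ≤ L * ‖x₁ - x₂‖)
    (hxs0 : xs 0 = 0) (hyu0 : yu 0 = 0)
    (T : EuclideanSpace ℝ (Fin nu) × EuclideanSpace ℝ (Fin ns) →
         EuclideanSpace ℝ (Fin nu) × EuclideanSpace ℝ (Fin ns))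
    (hT : T = fun p => (p.1 - xs p.2, p.2 - yu p.1)) :
    (∀ R : ℝ, 0 < R →
      (Metric.closedBall (0 : EuclideanSpace ℝ (Fin nu)) ((1 - L) * R)) ×ˢ
        (Metric.closedBall (0 : EuclideanSpace ℝ (Fin ns)) ((1 - L) * R)) ⊆
      T '' ((Metric.closedBall 0 R) ×ˢ (Metric.closedBall 0 R))) ∧
    Function.Surjective T := by
  subst hT
  have main : ∀ R : ℝ, 0 < R →
      (Metric.closedBall (0 : EuclideanSpace ℝ (Fin nu)) ((1 - L) * R)) ×ˢ
        (Metric.closedBall (0 : EuclideanSpace ℝ (Fin ns)) ((1 - L) * R)) ⊆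
      (fun p => (p.1 - xs p.2, p.2 - yu p.1)) ''
        ((Metric.closedBall 0 R) ×ˢ (Metric.closedBall 0 R)) := by
    intro R hR p hp
    rw [Set.mem_prod, Metric.mem_closedBall, Metric.mem_closedBall,
      dist_zero_right, dist_zero_right] at hp
    obtain ⟨ha, hb⟩ := hp
    set S : Set (EuclideanSpace ℝ (Fin nu) × EuclideanSpace ℝ (Fin ns)) :=
      (Metric.closedBall 0 R) ×ˢ (Metric.closedBall 0 R) with hS
    have hScl : IsClosed S :=
      Metric.isClosed_closedBall.prod Metric.isClosed_closedBall
    haveI : CompleteSpace S := hScl.completeSpace_coe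
    haveI : Nonempty S := ⟨⟨(0, 0), by
      constructor <;> simp [Metric.mem_closedBall, hR.le]⟩⟩
    have hmap : ∀ q : EuclideanSpace ℝ (Fin nu) × EuclideanSpace ℝ (Fin ns),
        q ∈ S → (p.1 + xs q.2, p.2 + yu q.1) ∈ S := by
      intro q hq
      rw [hS, Set.mem_prod, Metric.mem_closedBall, Metric.mem_closedBall,
        dist_zero_right, dist_zero_right] at hq ⊢
      constructor
      · calc ‖p.1 + xs q.2‖ ≤ ‖p.1‖ + ‖xs q.2‖ := norm_add_le _ _
          _ ≤ (1 - L) * R + L * ‖q.2‖ := by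
              have := hxs q.2 0
              simp only [hxs0, sub_zero] at this
              linarith
          _ ≤ (1 - L) * R + L * R := by nlinarith [hq.2]
          _ = R := by ring
      · calc ‖p.2 + yu q.1‖ ≤ ‖p.2‖ + ‖yu q.1‖ := norm_add_le _ _
          _ ≤ (1 - L) * R + L * ‖q.1‖ := by
              have := hyu q.1 0
              simp only [hyu0, sub_zero] at this
              linarith
          _ ≤ (1 - L) * R + L * R := by nlinarith [hq.1]
          _ = R := by ring
    set f : S → S := fun q => ⟨(p.1 + xs q.1.2, p.2 + yu q.1.1), hmap _ q.2⟩ with hf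
    have hLip : LipschitzWith ⟨L, hL0⟩ f := by
      apply LipschitzWith.of_dist_le_mul
      intro q r
      have h1 : dist (f q) (f r) = max (dist (f q).1.1 (f r).1.1) (dist (f q).1.2 (f r).1.2) := by
        rw [Subtype.dist_eq, Prod.dist_eq]
      have h2 : dist q r = max (dist q.1.1 r.1.1) (dist q.1.2 r.1.2) := by
        rw [Subtype.dist_eq, Prod.dist_eq]
      rw [h1, h2]
      simp only [hf]
      have e1 : dist (p.1 + xs q.1.2) (p.1 + xs r.1.2) ≤ L * dist q.1.2 r.1.2 := by
        rw [dist_add_left, dist_eq_norm, dist_eq_norm]; exact hxs _ _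
      have e2 : dist (p.2 + yu q.1.1) (p.2 + yu r.1.1) ≤ L * dist q.1.1 r.1.1 := by
        rw [dist_add_left, dist_eq_norm, dist_eq_norm]; exact hyu _ _
      apply max_le
      · exact e1.trans (by apply mul_le_mul_of_nonneg_left (le_max_right _ _) hL0)
      · exact e2.trans (by apply mul_le_mul_of_nonneg_left (le_max_left _ _) hL0)
    have hcontr : ContractingWith ⟨L, hL0⟩ f :=
      ⟨by exact_mod_cast hL, hLip⟩
    set z := ContractingWith.fixedPoint f hcontr with hzdef
    have hz : f z = z := hcontr.fixedPoint_isFixedPt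
    have hz' : (z : _) = (p.1 + xs z.1.2, p.2 + yu z.1.1) := by
      conv_lhs => rw [← hz]
    refine ⟨z.val, z.prop, ?_⟩
    have h1 : z.val.1 = p.1 + xs z.val.2 := congrArg Prod.fst hz'
    have h2 : z.val.2 = p.2 + yu z.val.1 := congrArg Prod.snd hz'
    have e1 : z.val.1 - xs z.val.2 = p.1 := by rw [h1, add_sub_cancel_right]
    have e2 : z.val.2 - yu z.val.1 = p.2 := by rw [h2, add_sub_cancel_right]
    exact Prod.ext e1 e2
  refine ⟨main, ?_⟩
  intro q
  have h1L : 0 < 1 - L := by linarith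
  set R : ℝ := max 1 ((max ‖q.1‖ ‖q.2‖) / (1 - L)) with hRdef
  have hR : 0 < R := lt_of_lt_of_le one_pos (le_max_left _ _)
  have hqmem : q ∈ (Metric.closedBall (0 : EuclideanSpace ℝ (Fin nu)) ((1 - L) * R)) ×ˢ
      (Metric.closedBall (0 : EuclideanSpace ℝ (Fin ns)) ((1 - L) * R)) := by
    have hle : max ‖q.1‖ ‖q.2‖ ≤ (1 - L) * R := by
      rw [hRdef]
      calc max ‖q.1‖ ‖q.2‖ = (1 - L) * ((max ‖q.1‖ ‖q.2‖) / (1 - L)) := by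
            field_simp
        _ ≤ (1 - L) * max 1 ((max ‖q.1‖ ‖q.2‖) / (1 - L)) :=
            mul_le_mul_of_nonneg_left (le_max_right _ _) h1L.le
    constructor <;> rw [Metric.mem_closedBall, dist_zero_right]
    · exact (le_max_left _ _).trans hle
    · exact (le_max_right _ _).trans hle
  obtain ⟨w, _, hw⟩ := main R hR hqmem
  exact ⟨w, hw⟩
end

section
/- Let y^u: R^{n_u} → R^{n_s} satisfy the equivariance relation e^{tA_s} y^u(x) = y^u(e^{tA_u}x) for all t ≥ 0 and all x with ‖e^{sA_u}x‖ ≥ ρ for s ∈ [0,t], together with ‖y^u(x)‖ ≤ Lρ whenever ‖x‖ = ρ. Assume μ_log(A_s) < 0 < m_l(A_u) ≤ μ_log(A_u). Then for all x with ‖x‖ ≥ ρ: ‖y^u(x)‖ ≤ Lρ·(‖x‖/ρ)^{μ_log(A_s)/μ_log(A_u)}. -/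
open NormedSpace

/-- Minimal logarithmic norm `m_l(A) = min_{‖v‖=1} (Av, v)`. -/
noncomputable def minLogNorm {n : ℕ}
    (A : EuclideanSpace ℝ (Fin n) →L[ℝ] EuclideanSpace ℝ (Fin n)) : ℝ :=
  sInf {r : ℝ | ∃ v : EuclideanSpace ℝ (Fin n), ‖v‖ = 1 ∧ r = (inner ℝ (A v) v : ℝ)}

/-- Logarithmic norm `μ_log(A) = max_{‖v‖=1} (Av, v)`. -/
noncomputable def logNorm {n : ℕ}
    (A : EuclideanSpace ℝ (Fin n) →L[ℝ] EuclideanSpace ℝ (Fin n)) : ℝ :=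
  sSup {r : ℝ | ∃ v : EuclideanSpace ℝ (Fin n), ‖v‖ = 1 ∧ r = (inner ℝ (A v) v : ℝ)}

/-!
Grönwall's inequality applied to `‖e^{tA} v‖²`, whose derivative is `2 ⟪A e^{tA} v, e^{tA} v⟫`,
gives `e^{m t} ‖v‖ ≤ ‖e^{tA} v‖ ≤ e^{M t} ‖v‖` for `t ≥ 0` whenever `m ‖v‖² ≤ ⟪A v, v⟫ ≤ M ‖v‖²`.
Since `m_l(A_u) > 0`, the norm along the orbit `s ↦ e^{s A_u} x` is increasing, so running it
backwards from `x` reaches the sphere of radius `ρ` at some `x₀ = e^{-T A_u} x`, and the forward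
orbit of `x₀` stays outside the ball up to time `T`. Equivariance then gives
`y^u(x) = e^{T A_s} y^u(x₀)`, hence `‖y^u(x)‖ ≤ e^{μ_log(A_s) T} L ρ`, while
`‖x‖ ≤ e^{μ_log(A_u) T} ρ` turns `e^{μ_log(A_s) T}` into `(‖x‖/ρ)^{μ_log(A_s)/μ_log(A_u)}`.
-/

open Set
open scoped RealInnerProductSpace

section FlowEstimates

variable {E : Type*} [NormedAddCommGroup E] [InnerProductSpace ℝ E] [CompleteSpace E]

theorem exp_smul_apply_exp_smul_apply (A : E →L[ℝ] E) (a b : ℝ) (v : E) :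
    exp (a • A) (exp (b • A) v) = exp ((a + b) • A) v := by
  let +nondep : NormedAlgebra ℚ (E →L[ℝ] E) := .restrictScalars ℚ ℝ _
  rw [add_smul, exp_add_of_commute ((Commute.refl A).smul_left a |>.smul_right b)]
  rfl

theorem exp_neg_smul_apply_exp_smul_apply (A : E →L[ℝ] E) (t : ℝ) (v : E) :
    exp ((-t) • A) (exp (t • A) v) = v := by
  rw [exp_smul_apply_exp_smul_apply, neg_add_cancel, zero_smul, exp_zero, one_apply_eq_self]

theorem exp_smul_apply_exp_neg_smul_apply (A : E →L[ℝ] E) (t : ℝ) (v : E) :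
    exp (t • A) (exp ((-t) • A) v) = v := by
  simpa using exp_neg_smul_apply_exp_smul_apply A (-t) v

theorem hasDerivAt_exp_smul_apply (A : E →L[ℝ] E) (v : E) (t : ℝ) :
    HasDerivAt (fun s : ℝ => exp (s • A) v) (A (exp (t • A) v)) t :=
  (ContinuousLinearMap.apply ℝ E v).hasFDerivAt.comp_hasDerivAt t
    (hasDerivAt_exp_smul_const' A t)

theorem hasDerivAt_norm_sq_exp_smul_apply (A : E →L[ℝ] E) (v : E) (t : ℝ) :
    HasDerivAt (fun s : ℝ => ‖exp (s • A) v‖ ^ 2)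
      (2 * ⟪A (exp (t • A) v), exp (t • A) v⟫) t := by
  have h := hasDerivAt_exp_smul_apply A v t
  simpa only [real_inner_self_eq_norm_sq, real_inner_comm (A _), ← two_mul] using h.inner ℝ h

theorem norm_exp_smul_apply_le {A : E →L[ℝ] E} {M : ℝ} (hA : ∀ v, ⟪A v, v⟫ ≤ M * ‖v‖ ^ 2)
    {t : ℝ} (ht : 0 ≤ t) (v : E) : ‖exp (t • A) v‖ ≤ Real.exp (M * t) * ‖v‖ := by
  have hderiv := hasDerivAt_norm_sq_exp_smul_apply A v
  have hsq : ‖exp (t • A) v‖ ^ 2 ≤ ‖v‖ ^ 2 * Real.exp ((2 * M) * t) := by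
    have := le_gronwallBound_of_liminf_deriv_right_le
      (δ := ‖v‖ ^ 2) (K := 2 * M) (ε := 0) (a := 0) (b := t)
      (fun s _ => (hderiv s).continuousAt.continuousWithinAt)
      (fun s _ _ hr => (hderiv s).hasDerivWithinAt.liminf_right_slope_le hr)
      (by simp) (fun s _ => by linarith [hA (exp (s • A) v)]) t ⟨ht, le_rfl⟩
    simpa [gronwallBound_ε0] using this
  rw [show 2 * M * t = M * t + M * t by ring, Real.exp_add] at hsq
  exact (sq_le_sq₀ (norm_nonneg _) (by positivity)).mp (by linarith)

theorem le_norm_exp_smul_apply {A : E →L[ℝ] E} {m : ℝ} (hA : ∀ v, m * ‖v‖ ^ 2 ≤ ⟪A v, v⟫)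
    {t : ℝ} (ht : 0 ≤ t) (v : E) : Real.exp (m * t) * ‖v‖ ≤ ‖exp (t • A) v‖ := by
  -- the upper bound for `-A`, applied to `exp (t • A) v`, runs the flow back to `v`
  have hneg : ∀ w, ⟪(-A) w, w⟫ ≤ -m * ‖w‖ ^ 2 := fun w => by
    simp only [neg_apply, inner_neg_left]
    linarith [hA w]
  have h := norm_exp_smul_apply_le hneg ht (exp (t • A) v)
  rw [smul_neg, ← neg_smul, exp_neg_smul_apply_exp_smul_apply, neg_mul, Real.exp_neg] at h
  rwa [le_inv_mul_iff₀ (Real.exp_pos _)] at h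

theorem exists_norm_eq_of_le_norm {A : E →L[ℝ] E} {m : ℝ} (hm : 0 < m)
    (hA : ∀ v, m * ‖v‖ ^ 2 ≤ ⟪A v, v⟫) {ρ : ℝ} (hρ : 0 < ρ) {x : E} (hx : ρ ≤ ‖x‖) :
    ∃ T : ℝ, 0 ≤ T ∧ ∃ x₀, ‖x₀‖ = ρ ∧ exp (T • A) x₀ = x ∧
      ∀ s ∈ Icc 0 T, ρ ≤ ‖exp (s • A) x₀‖ := by
  set g : ℝ → ℝ := fun s => ‖exp (s • A) x‖
  have hg_mono : Monotone g := fun s s' hss' => by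
    have h := le_norm_exp_smul_apply hA (sub_nonneg.2 hss') (exp (s • A) x)
    rw [exp_smul_apply_exp_smul_apply, sub_add_cancel] at h
    exact le_trans (le_mul_of_one_le_left (norm_nonneg _)
      (Real.one_le_exp (mul_nonneg hm.le (sub_nonneg.2 hss')))) h
  have hg_cont : Continuous g :=
    ((differentiable_exp_smul_const ℝ A).continuous.clm_apply continuous_const).norm
  set s₁ := Real.log (‖x‖ / ρ) / m
  have hs₁ : 0 ≤ s₁ := div_nonneg (Real.log_nonneg ((one_le_div hρ).2 hx)) hm.le
  have hx_pos : 0 < ‖x‖ := hρ.trans_le hx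
  have hg_s₁ : g (-s₁) ≤ ρ := by
    have h := le_norm_exp_smul_apply hA hs₁ (exp ((-s₁) • A) x)
    rw [exp_smul_apply_exp_neg_smul_apply, mul_div_cancel₀ _ hm.ne',
      Real.exp_log (by positivity), div_mul_eq_mul_div, div_le_iff₀ hρ] at h
    exact le_of_mul_le_mul_left h hx_pos
  have hg_0 : ρ ≤ g 0 := by simpa [g] using hx
  obtain ⟨T', ⟨hT's, hT'0⟩, hgT'⟩ :=
    intermediate_value_Icc (neg_nonpos.2 hs₁) hg_cont.continuousOn ⟨hg_s₁, hg_0⟩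
  refine ⟨-T', neg_nonneg.2 hT'0, exp (T' • A) x, hgT', ?_, fun s hs => ?_⟩
  · exact exp_neg_smul_apply_exp_smul_apply A T' x
  · rw [exp_smul_apply_exp_smul_apply, ← hgT']
    exact hg_mono (by linarith [hs.1])

end FlowEstimates

section NumericalRange

variable {E : Type*} [NormedAddCommGroup E] [InnerProductSpace ℝ E]

theorem abs_inner_apply_self_le (A : E →L[ℝ] E) (v : E) : |⟪A v, v⟫| ≤ ‖A‖ * ‖v‖ ^ 2 :=
  calc |⟪A v, v⟫| ≤ ‖A v‖ * ‖v‖ := abs_real_inner_le_norm _ _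
    _ ≤ ‖A‖ * ‖v‖ * ‖v‖ := by gcongr; exact A.le_opNorm v
    _ = ‖A‖ * ‖v‖ ^ 2 := by ring

theorem inner_apply_self_eq_inner_normalize_mul (A : E →L[ℝ] E) {u : E} (hu : u ≠ 0) :
    ⟪A u, u⟫ = ⟪A ((‖u‖⁻¹ : ℝ) • u), (‖u‖⁻¹ : ℝ) • u⟫ * ‖u‖ ^ 2 := by
  have : ‖u‖ ≠ 0 := norm_ne_zero_iff.2 hu
  rw [map_smul, real_inner_smul_left, real_inner_smul_right]
  field_simp

end NumericalRange

section LogNorm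

variable {n : ℕ}

theorem inner_le_logNorm (A : EuclideanSpace ℝ (Fin n) →L[ℝ] EuclideanSpace ℝ (Fin n))
    (u : EuclideanSpace ℝ (Fin n)) : ⟪A u, u⟫ ≤ logNorm A * ‖u‖ ^ 2 := by
  rcases eq_or_ne u 0 with rfl | hu
  · simp
  have hbdd : BddAbove {r : ℝ | ∃ v : EuclideanSpace ℝ (Fin n), ‖v‖ = 1 ∧ r = ⟪A v, v⟫} :=
    ⟨‖A‖, by rintro _ ⟨v, hv, rfl⟩; simpa [hv] using (abs_le.1 (abs_inner_apply_self_le A v)).2⟩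
  rw [inner_apply_self_eq_inner_normalize_mul A hu]
  gcongr
  exact le_csSup hbdd ⟨_, norm_smul_inv_norm hu, rfl⟩

theorem minLogNorm_le_inner (A : EuclideanSpace ℝ (Fin n) →L[ℝ] EuclideanSpace ℝ (Fin n))
    (u : EuclideanSpace ℝ (Fin n)) : minLogNorm A * ‖u‖ ^ 2 ≤ ⟪A u, u⟫ := by
  rcases eq_or_ne u 0 with rfl | hu
  · simp
  have hbdd : BddBelow {r : ℝ | ∃ v : EuclideanSpace ℝ (Fin n), ‖v‖ = 1 ∧ r = ⟪A v, v⟫} :=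
    ⟨-‖A‖, by rintro _ ⟨v, hv, rfl⟩; simpa [hv] using (abs_le.1 (abs_inner_apply_self_le A v)).1⟩
  rw [inner_apply_self_eq_inner_normalize_mul A hu]
  gcongr
  exact csInf_le hbdd ⟨_, norm_smul_inv_norm hu, rfl⟩

end LogNorm

theorem exp_mul_le_rpow_div {a b r T : ℝ} (ha : a ≤ 0) (hb : 0 < b) (hr : 0 < r)
    (hrT : r ≤ Real.exp (b * T)) : Real.exp (a * T) ≤ r ^ (a / b) :=
  calc Real.exp (a * T) = Real.exp (b * T) ^ (a / b) := by
        rw [← Real.exp_mul]; field_simp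
    _ ≤ r ^ (a / b) := Real.rpow_le_rpow_of_nonpos hr hrT (div_nonpos_of_nonpos_of_nonneg ha hb.le)

theorem stmt_13_general (nu ns : ℕ) (L ρ : ℝ) (hρ : 0 < ρ)
    (Au : EuclideanSpace ℝ (Fin nu) →L[ℝ] EuclideanSpace ℝ (Fin nu))
    (As : EuclideanSpace ℝ (Fin ns) →L[ℝ] EuclideanSpace ℝ (Fin ns))
    (hAs : logNorm As < 0) (hAu : 0 < minLogNorm Au)
    (hAu2 : minLogNorm Au ≤ logNorm Au)
    (yu : EuclideanSpace ℝ (Fin nu) → EuclideanSpace ℝ (Fin ns))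
    (hequiv : ∀ t : ℝ, 0 ≤ t → ∀ x : EuclideanSpace ℝ (Fin nu),
      (∀ s ∈ Set.Icc 0 t, ρ ≤ ‖(exp (s • Au)) x‖) →
      (exp (t • As)) (yu x) = yu ((exp (t • Au)) x))
    (hbnd : ∀ x : EuclideanSpace ℝ (Fin nu), ‖x‖ = ρ → ‖yu x‖ ≤ L * ρ) :
    ∀ x : EuclideanSpace ℝ (Fin nu), ρ ≤ ‖x‖ →
      ‖yu x‖ ≤ L * ρ * (‖x‖ / ρ) ^ (logNorm As / logNorm Au) := by
  intro x hx
  obtain ⟨T, hT, x₀, hx₀, rfl, hstay⟩ :=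
    exists_norm_eq_of_le_norm hAu (minLogNorm_le_inner Au) hρ hx
  have hgrowth : ‖exp (T • Au) x₀‖ / ρ ≤ Real.exp (logNorm Au * T) := by
    rw [div_le_iff₀ hρ, ← hx₀]
    exact norm_exp_smul_apply_le (inner_le_logNorm Au) hT x₀
  have hLρ : 0 ≤ L * ρ := (norm_nonneg _).trans (hbnd x₀ hx₀)
  calc ‖yu (exp (T • Au) x₀)‖ = ‖exp (T • As) (yu x₀)‖ := by rw [hequiv T hT x₀ hstay]
    _ ≤ Real.exp (logNorm As * T) * ‖yu x₀‖ := norm_exp_smul_apply_le (inner_le_logNorm As) hT _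
    _ ≤ Real.exp (logNorm As * T) * (L * ρ) := by gcongr; exact hbnd x₀ hx₀
    _ ≤ (‖exp (T • Au) x₀‖ / ρ) ^ (logNorm As / logNorm Au) * (L * ρ) := by
        gcongr
        exact exp_mul_le_rpow_div hAs.le (hAu.trans_le hAu2)
          (div_pos (hρ.trans_le hx) hρ) hgrowth
    _ = L * ρ * (‖exp (T • Au) x₀‖ / ρ) ^ (logNorm As / logNorm Au) := mul_comm _ _

theorem stmt_13 (nu ns : ℕ) (L ρ : ℝ) (hL : 0 < L) (hρ : 0 < ρ)
    (Au : EuclideanSpace ℝ (Fin nu) →L[ℝ] EuclideanSpace ℝ (Fin nu))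
    (As : EuclideanSpace ℝ (Fin ns) →L[ℝ] EuclideanSpace ℝ (Fin ns))
    (hAs : logNorm As < 0) (hAu : 0 < minLogNorm Au)
    (hAu2 : minLogNorm Au ≤ logNorm Au)
    (yu : EuclideanSpace ℝ (Fin nu) → EuclideanSpace ℝ (Fin ns))
    (hequiv : ∀ t : ℝ, 0 ≤ t → ∀ x : EuclideanSpace ℝ (Fin nu),
      (∀ s ∈ Set.Icc 0 t, ρ ≤ ‖(exp (s • Au)) x‖) →
      (exp (t • As)) (yu x) = yu ((exp (t • Au)) x))
    (hbnd : ∀ x : EuclideanSpace ℝ (Fin nu), ‖x‖ = ρ → ‖yu x‖ ≤ L * ρ) :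
    ∀ x : EuclideanSpace ℝ (Fin nu), ρ ≤ ‖x‖ →
      ‖yu x‖ ≤ L * ρ * (‖x‖ / ρ) ^ (logNorm As / logNorm Au) :=
  stmt_13_general nu ns L ρ hρ Au As hAs hAu hAu2 yu hequiv hbnd
end

section
/- Let W ⊂ R^n, and let φ: R × R^n → R^n be a flow. Suppose every backward orbit starting at z in a set N splits into at most three intervals: [0,T_1] outside D, [T_1,T_2) inside D, and (T_2,T_3] outside D, with T_1 ≤ T_{13} and T_3 − T_2 ≤ T_{13} for a uniform constant T_{13}. Suppose ‖π_x φ(−t,z)‖ ≤ ‖π_x φ(0,z)‖e^{Mt} whenever φ(−s,z) ∉ D for s ∈ [0,t] (with constant M ≥ 0), and ‖π_x φ(−t,z)‖ ≤ ‖π_x φ(0,z)‖ e^{−μ' t} whenever the backward segment stays in D, i.e. exponential contraction backward at rate μ' > 0 inside D. Then there exists a constant C = e^{2MT_{13}}e^{2μ' T_{13}} such that ‖π_x φ(−t,z)‖ ≤ C‖π_x z‖e^{−μ' t} for all t ∈ [0, −T^-_N(z)). -/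
theorem stmt_18 (n p : ℕ) (M μ' T₁ T₂ T₃ T₁₃ : ℝ)
    (hM : 0 ≤ M) (hμ : 0 < μ') (hT₁₃ : 0 ≤ T₁₃)
    (φ : ℝ → EuclideanSpace ℝ (Fin n) → EuclideanSpace ℝ (Fin n))
    (πx : EuclideanSpace ℝ (Fin n) →L[ℝ] EuclideanSpace ℝ (Fin p))
    (z : EuclideanSpace ℝ (Fin n))
    (hφ0 : φ 0 z = z)
    (hord : 0 ≤ T₁ ∧ T₁ ≤ T₂ ∧ T₂ ≤ T₃)
    (hbnd1 : T₁ ≤ T₁₃) (hbnd3 : T₃ - T₂ ≤ T₁₃)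
    -- first excursion outside the block: at most exponential growth at rate M
    (hA : ∀ t ∈ Set.Icc 0 T₁,
      ‖πx (φ (-t) z)‖ ≤ ‖πx z‖ * Real.exp (M * t))
    -- inside the block: backward exponential contraction at rate μ'
    (hB : ∀ t ∈ Set.Icc T₁ T₂,
      ‖πx (φ (-t) z)‖ ≤ ‖πx (φ (-T₁) z)‖ * Real.exp (-μ' * (t - T₁)))
    -- last excursion outside the block: at most exponential growth at rate M
    (hC : ∀ t ∈ Set.Icc T₂ T₃,
      ‖πx (φ (-t) z)‖ ≤ ‖πx (φ (-T₂) z)‖ * Real.exp (M * (t - T₂))) :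
    ∀ t ∈ Set.Icc 0 T₃,
      ‖πx (φ (-t) z)‖ ≤
        Real.exp (2 * M * T₁₃) * Real.exp (2 * μ' * T₁₃) * ‖πx z‖ *
          Real.exp (-μ' * t) := by
  obtain ⟨hT01, hT12, hT23⟩ := hord
  have hz : (0:ℝ) ≤ ‖πx z‖ := norm_nonneg _
  intro t ht
  obtain ⟨ht0, ht3⟩ := ht
  rcases le_or_gt t T₁ with h1 | h1
  · have key : Real.exp (M * t) ≤
        Real.exp (2 * M * T₁₃) * Real.exp (2 * μ' * T₁₃) * Real.exp (-μ' * t) := by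
      rw [← Real.exp_add, ← Real.exp_add, Real.exp_le_exp]
      nlinarith [mul_nonneg hM (sub_nonneg.2 (h1.trans hbnd1)),
        mul_nonneg hμ.le ht0, mul_nonneg hμ.le hT₁₃]
    calc ‖πx (φ (-t) z)‖ ≤ ‖πx z‖ * Real.exp (M * t) := hA t ⟨ht0, h1⟩
      _ ≤ ‖πx z‖ * (Real.exp (2 * M * T₁₃) * Real.exp (2 * μ' * T₁₃) * Real.exp (-μ' * t)) :=
          mul_le_mul_of_nonneg_left key hz
      _ = _ := by ring
  · rcases le_or_gt t T₂ with h2 | h2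
    · have key : Real.exp (M * T₁) * Real.exp (-μ' * (t - T₁)) ≤
          Real.exp (2 * M * T₁₃) * Real.exp (2 * μ' * T₁₃) * Real.exp (-μ' * t) := by
        rw [← Real.exp_add, ← Real.exp_add, ← Real.exp_add, Real.exp_le_exp]
        nlinarith [mul_nonneg hM (sub_nonneg.2 hbnd1),
          mul_nonneg hμ.le (sub_nonneg.2 hbnd1), mul_nonneg hμ.le hT₁₃,
          mul_nonneg hM hT₁₃]
      calc ‖πx (φ (-t) z)‖ ≤ ‖πx (φ (-T₁) z)‖ * Real.exp (-μ' * (t - T₁)) :=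
            hB t ⟨h1.le, h2⟩
        _ ≤ (‖πx z‖ * Real.exp (M * T₁)) * Real.exp (-μ' * (t - T₁)) :=
            mul_le_mul_of_nonneg_right (hA T₁ ⟨hT01, le_refl _⟩) (Real.exp_pos _).le
        _ = ‖πx z‖ * (Real.exp (M * T₁) * Real.exp (-μ' * (t - T₁))) := by ring
        _ ≤ ‖πx z‖ * (Real.exp (2 * M * T₁₃) * Real.exp (2 * μ' * T₁₃) * Real.exp (-μ' * t)) :=
            mul_le_mul_of_nonneg_left key hz
        _ = _ := by ring
    · have hts : t - T₂ ≤ T₁₃ := le_trans (by linarith) hbnd3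
      have key : Real.exp (M * T₁) * Real.exp (-μ' * (T₂ - T₁)) * Real.exp (M * (t - T₂)) ≤
          Real.exp (2 * M * T₁₃) * Real.exp (2 * μ' * T₁₃) * Real.exp (-μ' * t) := by
        rw [← Real.exp_add, ← Real.exp_add, ← Real.exp_add, ← Real.exp_add, Real.exp_le_exp]
        nlinarith [mul_nonneg hM (sub_nonneg.2 hbnd1),
          mul_nonneg hM (sub_nonneg.2 hts),
          mul_nonneg hμ.le (sub_nonneg.2 hbnd1),
          mul_nonneg hμ.le (sub_nonneg.2 hts)]
      calc ‖πx (φ (-t) z)‖ ≤ ‖πx (φ (-T₂) z)‖ * Real.exp (M * (t - T₂)) :=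
            hC t ⟨h2.le, ht3⟩
        _ ≤ (‖πx (φ (-T₁) z)‖ * Real.exp (-μ' * (T₂ - T₁))) * Real.exp (M * (t - T₂)) :=
            mul_le_mul_of_nonneg_right (hB T₂ ⟨hT12, le_refl _⟩) (Real.exp_pos _).le
        _ ≤ ((‖πx z‖ * Real.exp (M * T₁)) * Real.exp (-μ' * (T₂ - T₁))) * Real.exp (M * (t - T₂)) := by
            gcongr
            exact hA T₁ ⟨hT01, le_refl _⟩
        _ = ‖πx z‖ * (Real.exp (M * T₁) * Real.exp (-μ' * (T₂ - T₁)) * Real.exp (M * (t - T₂))) := by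
            ring
        _ ≤ ‖πx z‖ * (Real.exp (2 * M * T₁₃) * Real.exp (2 * μ' * T₁₃) * Real.exp (-μ' * t)) :=
            mul_le_mul_of_nonneg_left key hz
        _ = _ := by ring
end
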